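/- Under the same assumptions (σ convex C¹ Lipschitz, H(t,·) convex and C¹ in p, p₀ = ∇σ(y) ∈ ℓ(t₀,x₀), characteristic x(t) = x₀ + ∫_{t₀}^t H_p(τ,p₀)dτ), assume additionally σ* is strictly convex on segments contained in its effective domain where the subdifferential is nonempty. Then for all t₁ ∈ [0,t₀): ℓ(t₁,x(t₁)) ⊆ ℓ(t₀,x₀). -/

import Mathlib

/-!
Since `σ` is differentiable at `y` with `∇σ(y) = p₀`, the conjugate `σ*(p₀) = ⟨y, p₀⟩ - σ(y)` is
finite. The first-order condition for `p₀` maximizing the Hopf functional at `(t₀, x₀)`, obtained by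
differentiating `q ↦ ∫₀^{t₀} H(τ, q) dτ` under the integral sign, says that
`z₀ = x₀ - ∫₀^{t₀} H_p(τ, p₀) dτ` is a subgradient of `σ*` at `p₀`. Now `x(t₁) = z₀ + ∫₀^{t₁} H_p(τ, p₀) dτ`,
so comparing the Hopf functional at `(t₁, x(t₁))` in a maximizer `q` and in `p₀`, and using the
convexity of `H(τ, ·)`, gives `σ*(q) ≤ σ*(p₀) + ⟨z₀, q - p₀⟩`. Strict convexity of `σ*` then forces
`q = p₀`, so `ℓ(t₁, x(t₁)) ⊆ {p₀}`.
-/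

local notation "⟪" x ", " y "⟫" => @inner ℝ _ _ x y

/-- The Fenchel (Legendre) conjugate of `σ`, with values in `EReal`. -/
noncomputable def fenchelConj {n : ℕ} (σ : EuclideanSpace ℝ (Fin n) → ℝ)
    (q : EuclideanSpace ℝ (Fin n)) : EReal :=
  ⨆ x : EuclideanSpace ℝ (Fin n), ((⟪x, q⟫ - σ x : ℝ) : EReal)

/-- The Hopf functional `φ(t,x,q) = ⟨x,q⟩ - σ*(q) - ∫₀ᵗ H(τ,q) dτ` (`EReal`-valued). -/
noncomputable def hopfPhi {n : ℕ} (σ : EuclideanSpace ℝ (Fin n) → ℝ)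
    (H : ℝ → EuclideanSpace ℝ (Fin n) → ℝ) (t : ℝ)
    (x q : EuclideanSpace ℝ (Fin n)) : EReal :=
  ((⟪x, q⟫ - ∫ τ in (0:ℝ)..t, H τ q : ℝ) : EReal) - fenchelConj σ q

/-- The set `ℓ(t,x)` of maximizers over `q ∈ ℝⁿ` of `φ(t,x,·)`. -/
def hopfArgmax {n : ℕ} (σ : EuclideanSpace ℝ (Fin n) → ℝ)
    (H : ℝ → EuclideanSpace ℝ (Fin n) → ℝ) (t : ℝ)
    (x : EuclideanSpace ℝ (Fin n)) : Set (EuclideanSpace ℝ (Fin n)) :=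
  {q | ∀ q', hopfPhi σ H t x q' ≤ hopfPhi σ H t x q}

open Set Filter Topology MeasureTheory
open scoped Interval

section Line

variable {E : Type*} [NormedAddCommGroup E] [InnerProductSpace ℝ E] {f : E → ℝ} {g q v : E}

lemma ConvexOn.directional_slope_le (hf : ConvexOn ℝ univ f) {s : ℝ} (hs0 : 0 < s)
    (hs1 : s ≤ 1) : (f (q + s • v) - f q) / s ≤ f (q + v) - f q := by
  have h := hf.2 (mem_univ q) (mem_univ (q + v)) (sub_nonneg.2 hs1) hs0.le (by ring)
  have hpt : (1 - s) • q + s • (q + v) = q + s • v := by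
    rw [smul_add, ← add_assoc, ← add_smul, sub_add_cancel, one_smul]
  rw [hpt, smul_eq_mul, smul_eq_mul] at h
  rw [div_le_iff₀ hs0]
  linarith

lemma HasGradientAt.tendsto_directional_slope [CompleteSpace E] (hg : HasGradientAt f g q)
    (v : E) : Tendsto (fun s : ℝ => (f (q + s • v) - f q) / s) (𝓝[>] 0) (𝓝 ⟪g, v⟫) := by
  have hline : HasDerivAt (fun s : ℝ => f (q + s • v)) ⟪g, v⟫ 0 := by
    simpa [HasLineDerivAt] using hg.hasFDerivAt.hasLineDerivAt v
  refine ((hasDerivAt_iff_tendsto_slope.1 hline).mono_left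
    (nhdsWithin_mono _ fun s hs => ne_of_gt hs)).congr fun s => ?_
  simp [slope_def_field]

lemma ConvexOn.inner_gradient_le [CompleteSpace E] (hf : ConvexOn ℝ univ f)
    (hg : HasGradientAt f g q) (v : E) : ⟪g, v⟫ ≤ f (q + v) - f q :=
  le_of_tendsto (hg.tendsto_directional_slope v) <| mem_of_superset
    (Ioc_mem_nhdsGT zero_lt_one) fun _ hs => hf.directional_slope_le hs.1 hs.2

lemma ConvexOn.sub_le_inner_gradient [CompleteSpace E] (hf : ConvexOn ℝ univ f)
    (hg : HasGradientAt f g q) (v : E) : f q - f (q - v) ≤ ⟪g, v⟫ := by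
  have h := hf.inner_gradient_le hg (-v)
  rw [inner_neg_right, ← sub_eq_add_neg] at h
  linarith

lemma abs_le_abs_add_abs_of_neg_le_of_le {x lo hi : ℝ} (hlo : -lo ≤ x) (hhi : x ≤ hi) :
    |x| ≤ |hi| + |lo| :=
  abs_le.2 ⟨by linarith [le_abs_self lo, abs_nonneg hi], by linarith [le_abs_self hi, abs_nonneg lo]⟩

lemma ConvexOn.abs_inner_gradient_le [CompleteSpace E] (hf : ConvexOn ℝ univ f)
    (hg : HasGradientAt f g q) (v : E) :
    |⟪g, v⟫| ≤ |f (q + v) - f q| + |f (q - v) - f q| :=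
  abs_le_abs_add_abs_of_neg_le_of_le (by linarith [hf.sub_le_inner_gradient hg v])
    (hf.inner_gradient_le hg v)

lemma ConvexOn.abs_directional_slope_le [CompleteSpace E] (hf : ConvexOn ℝ univ f)
    (hg : HasGradientAt f g q) {s : ℝ} (hs0 : 0 < s) (hs1 : s ≤ 1) :
    |(f (q + s • v) - f q) / s| ≤ |f (q + v) - f q| + |f (q - v) - f q| := by
  have hslope : ⟪g, v⟫ ≤ (f (q + s • v) - f q) / s := by
    rw [le_div_iff₀ hs0, mul_comm, ← real_inner_smul_right]
    exact hf.inner_gradient_le hg (s • v)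
  exact abs_le_abs_add_abs_of_neg_le_of_le (by linarith [hf.sub_le_inner_gradient hg v])
    (hf.directional_slope_le hs0 hs1)

end Line

section Hamiltonian

variable {E : Type*} [NormedAddCommGroup E] [InnerProductSpace ℝ E] [CompleteSpace E]
  {H : ℝ → E → ℝ} {Hp : ℝ → E → E} {a b : ℝ}

lemma inner_intervalIntegral_left {f : ℝ → E} (hf : IntervalIntegrable f volume a b) (u : E) :
    ⟪∫ τ in a..b, f τ, u⟫ = ∫ τ in a..b, ⟪f τ, u⟫ := by
  simpa only [innerSL_apply_apply, real_inner_comm u] using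
    ((innerSL ℝ u).intervalIntegral_comp_comm hf).symm

structure ConvexHamiltonianOn (H : ℝ → E → ℝ) (Hp : ℝ → E → E) (s : Set ℝ) : Prop where
  continuousOn : ∀ q, ContinuousOn (fun τ => H τ q) s
  convexOn : ∀ τ ∈ s, ConvexOn ℝ univ (H τ)
  hasGradientAt : ∀ τ ∈ s, ∀ q, HasGradientAt (H τ) (Hp τ q) q

lemma ConvexHamiltonianOn.mono {s t : Set ℝ} (h : ConvexHamiltonianOn H Hp s) (hts : t ⊆ s) :
    ConvexHamiltonianOn H Hp t :=
  ⟨fun q => (h.continuousOn q).mono hts, fun τ hτ => h.convexOn τ (hts hτ),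
    fun τ hτ => h.hasGradientAt τ (hts hτ)⟩

/-- `⟪Hp τ q, v⟫` is the pointwise limit of difference quotients of `H`, which are continuous in
`τ`. -/
lemma aestronglyMeasurable_inner_gradient (hc : ∀ q, ContinuousOn (fun τ => H τ q) [[a, b]])
    (hg : ∀ τ ∈ [[a, b]], ∀ q, HasGradientAt (H τ) (Hp τ q) q) (q v : E) :
    AEStronglyMeasurable (fun τ => ⟪Hp τ q, v⟫) (volume.restrict (Ι a b)) :=
  aestronglyMeasurable_of_tendsto_ae (𝓝[>] (0 : ℝ))
    (fun s => ((((hc _).sub (hc q)).div_const s).mono uIoc_subset_uIcc).aestronglyMeasurable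
      measurableSet_uIoc)
    (ae_restrict_of_forall_mem measurableSet_uIoc fun τ hτ =>
      (hg τ (uIoc_subset_uIcc hτ) q).tendsto_directional_slope v)

namespace ConvexHamiltonianOn

lemma intervalIntegrable_slope_bound (h : ConvexHamiltonianOn H Hp [[a, b]]) (q v : E) :
    IntervalIntegrable (fun τ => |H τ (q + v) - H τ q| + |H τ (q - v) - H τ q|) volume a b :=
  ((((h.continuousOn _).sub (h.continuousOn q)).abs).add
    (((h.continuousOn _).sub (h.continuousOn q)).abs)).intervalIntegrable

lemma intervalIntegrable_inner_gradient (h : ConvexHamiltonianOn H Hp [[a, b]]) (q v : E) :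
    IntervalIntegrable (fun τ => ⟪Hp τ q, v⟫) volume a b :=
  (h.intervalIntegrable_slope_bound q v).mono_fun'
    (aestronglyMeasurable_inner_gradient h.continuousOn h.hasGradientAt q v)
    (ae_restrict_of_forall_mem measurableSet_uIoc fun τ hτ => by
      simpa only [Real.norm_eq_abs] using (h.convexOn τ (uIoc_subset_uIcc hτ)).abs_inner_gradient_le
        (h.hasGradientAt τ (uIoc_subset_uIcc hτ) q) v)

lemma intervalIntegrable_gradient [FiniteDimensional ℝ E] (h : ConvexHamiltonianOn H Hp [[a, b]])
    (q : E) : IntervalIntegrable (fun τ => Hp τ q) volume a b := by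
  let e := stdOrthonormalBasis ℝ E
  have hrepr : (fun τ => Hp τ q) = ∑ i, fun τ => ⟪e i, Hp τ q⟫ • e i := by
    ext1 τ
    rw [Finset.sum_apply, e.sum_repr']
  rw [hrepr]
  refine IntervalIntegrable.sum _ fun i _ => ?_
  have hi : IntervalIntegrable (fun τ => ⟪e i, Hp τ q⟫) volume a b := by
    simpa only [real_inner_comm (e i)] using h.intervalIntegrable_inner_gradient q (e i)
  exact ⟨hi.1.smul_const _, hi.2.smul_const _⟩

lemma tendsto_slope_intervalIntegral (h : ConvexHamiltonianOn H Hp [[a, b]]) (q v : E) :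
    Tendsto (fun s : ℝ => ((∫ τ in a..b, H τ (q + s • v)) - ∫ τ in a..b, H τ q) / s)
      (𝓝[>] 0) (𝓝 (∫ τ in a..b, ⟪Hp τ q, v⟫)) := by
  have hquot : ∀ s : ℝ, ((∫ τ in a..b, H τ (q + s • v)) - ∫ τ in a..b, H τ q) / s =
      ∫ τ in a..b, (H τ (q + s • v) - H τ q) / s := fun s => by
    rw [intervalIntegral.integral_div, intervalIntegral.integral_sub
      (h.continuousOn _).intervalIntegrable (h.continuousOn q).intervalIntegrable]
  simp_rw [hquot]
  -- convexity bounds the difference quotients uniformly for `s ∈ (0, 1]`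
  refine intervalIntegral.tendsto_integral_filter_of_dominated_convergence _
    (Eventually.of_forall fun s => ((((h.continuousOn _).sub (h.continuousOn q)).div_const s).mono
      uIoc_subset_uIcc).aestronglyMeasurable measurableSet_uIoc)
    (mem_of_superset (Ioc_mem_nhdsGT zero_lt_one) fun s hs => ae_of_all _ fun τ hτ => ?_)
    (h.intervalIntegrable_slope_bound q v)
    (ae_of_all _ fun τ hτ => (h.hasGradientAt τ (uIoc_subset_uIcc hτ) q).tendsto_directional_slope v)
  rw [Real.norm_eq_abs]
  exact (h.convexOn τ (uIoc_subset_uIcc hτ)).abs_directional_slope_le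
    (h.hasGradientAt τ (uIoc_subset_uIcc hτ) q) hs.1 hs.2

lemma intervalIntegral_inner_gradient_le (h : ConvexHamiltonianOn H Hp [[a, b]]) (hab : a ≤ b)
    (q v : E) :
    ∫ τ in a..b, ⟪Hp τ q, v⟫ ≤ (∫ τ in a..b, H τ (q + v)) - ∫ τ in a..b, H τ q := by
  rw [← intervalIntegral.integral_sub (h.continuousOn _).intervalIntegrable
    (h.continuousOn q).intervalIntegrable]
  refine intervalIntegral.integral_mono_on hab (h.intervalIntegrable_inner_gradient q v)
    ((h.continuousOn _).sub (h.continuousOn q)).intervalIntegrable fun τ hτ => ?_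
  exact (h.convexOn τ (Icc_subset_uIcc hτ)).inner_gradient_le
    (h.hasGradientAt τ (Icc_subset_uIcc hτ) q) v

end ConvexHamiltonianOn

end Hamiltonian

section Conjugate

variable {n : ℕ} {σ : EuclideanSpace ℝ (Fin n) → ℝ} {H : ℝ → EuclideanSpace ℝ (Fin n) → ℝ}
  {t : ℝ} {p q w x y : EuclideanSpace ℝ (Fin n)}

lemma coe_le_fenchelConj (u q : EuclideanSpace ℝ (Fin n)) :
    ((⟪u, q⟫ - σ u : ℝ) : EReal) ≤ fenchelConj σ q :=
  le_iSup (fun u => ((⟪u, q⟫ - σ u : ℝ) : EReal)) u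

lemma fenchelConj_ne_bot (q : EuclideanSpace ℝ (Fin n)) : fenchelConj σ q ≠ ⊥ :=
  ne_bot_of_le_ne_bot (EReal.coe_ne_bot _) (coe_le_fenchelConj 0 q)

lemma fenchelConj_eq_of_hasGradientAt (hσ : ConvexOn ℝ univ σ) (hg : HasGradientAt σ p y) :
    fenchelConj σ p = ((⟪y, p⟫ - σ y : ℝ) : EReal) := by
  refine le_antisymm (iSup_le fun u => EReal.coe_le_coe_iff.2 ?_) (coe_le_fenchelConj y p)
  have h := hσ.inner_gradient_le hg (u - y)
  rw [add_sub_cancel, inner_sub_right, real_inner_comm u p, real_inner_comm y p] at h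
  linarith

lemma fenchelConj_add_smul_sub_le {a b s : ℝ} (ha : fenchelConj σ p ≤ a)
    (hb : fenchelConj σ w ≤ b) (hs0 : 0 ≤ s) (hs1 : s ≤ 1) :
    fenchelConj σ (p + s • (w - p)) ≤ ((a + s * (b - a) : ℝ) : EReal) := by
  refine iSup_le fun u => EReal.coe_le_coe_iff.2 ?_
  have hp := EReal.coe_le_coe_iff.1 ((coe_le_fenchelConj u p).trans ha)
  have hw := EReal.coe_le_coe_iff.1 ((coe_le_fenchelConj u w).trans hb)
  rw [inner_add_right, real_inner_smul_right, inner_sub_right]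
  nlinarith

lemma hopfPhi_eq_coe {c : ℝ} (hc : fenchelConj σ q = c) :
    hopfPhi σ H t x q = ((⟪x, q⟫ - (∫ τ in (0:ℝ)..t, H τ q) - c : ℝ) : EReal) := by
  rw [hopfPhi, hc, ← EReal.coe_sub]

lemma coe_le_hopfPhi {c : ℝ} (hc : fenchelConj σ q ≤ c) :
    ((⟪x, q⟫ - (∫ τ in (0:ℝ)..t, H τ q) - c : ℝ) : EReal) ≤ hopfPhi σ H t x q := by
  rw [hopfPhi, EReal.coe_sub]
  exact EReal.sub_le_sub le_rfl hc

lemma fenchelConj_le_of_coe_le_hopfPhi {r : ℝ} (hr : (r : EReal) ≤ hopfPhi σ H t x q) :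
    fenchelConj σ q ≤ ((⟪x, q⟫ - (∫ τ in (0:ℝ)..t, H τ q) - r : ℝ) : EReal) := by
  rw [hopfPhi, EReal.le_sub_iff_add_le (Or.inr (EReal.coe_ne_bot _))
    (Or.inr (EReal.coe_ne_top _))] at hr
  rw [EReal.coe_sub, EReal.le_sub_iff_add_le (Or.inl (EReal.coe_ne_bot _))
    (Or.inl (EReal.coe_ne_top _)), add_comm]
  exact hr

end Conjugate

def HasSubgradientAt {E : Type*} [NormedAddCommGroup E] [InnerProductSpace ℝ E]
    (f : E → EReal) (z p : E) : Prop :=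
  ∀ w, ((⟪z, w - p⟫ : ℝ) : EReal) + f p ≤ f w

namespace ConvexHamiltonianOn

variable {n : ℕ} {σ : EuclideanSpace ℝ (Fin n) → ℝ} {H : ℝ → EuclideanSpace ℝ (Fin n) → ℝ}
  {Hp : ℝ → EuclideanSpace ℝ (Fin n) → EuclideanSpace ℝ (Fin n)} {t a : ℝ}
  {p q x z : EuclideanSpace ℝ (Fin n)}

lemma hasSubgradientAt_fenchelConj_of_mem_hopfArgmax (hH : ConvexHamiltonianOn H Hp [[0, t]])
    (hp : p ∈ hopfArgmax σ H t x) (ha : fenchelConj σ p = a) :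
    HasSubgradientAt (fenchelConj σ) (x - ∫ τ in (0:ℝ)..t, Hp τ p) p := by
  intro w
  rcases eq_or_ne (fenchelConj σ w) ⊤ with htop | hne
  · rw [htop]
    exact le_top
  obtain ⟨b, hb⟩ : ∃ b : ℝ, fenchelConj σ w = b :=
    ⟨_, (EReal.coe_toReal hne (fenchelConj_ne_bot w)).symm⟩
  have hslope : ∀ s ∈ Ioc (0:ℝ) 1, ⟪x, w - p⟫ - ((∫ τ in (0:ℝ)..t, H τ (p + s • (w - p))) -
      ∫ τ in (0:ℝ)..t, H τ p) / s ≤ b - a := by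
    intro s hs
    have hmax := EReal.coe_le_coe_iff.1 <|
      (coe_le_hopfPhi (x := x) (t := t) (H := H) (fenchelConj_add_smul_sub_le ha.le hb.le
        hs.1.le hs.2)).trans ((hp _).trans_eq (hopfPhi_eq_coe ha))
    rw [inner_add_right, real_inner_smul_right] at hmax
    rw [sub_le_iff_le_add, ← sub_le_iff_le_add', le_div_iff₀ hs.1]
    linarith
  have hlim := le_of_tendsto (tendsto_const_nhds.sub (hH.tendsto_slope_intervalIntegral p (w - p)))
    (mem_of_superset (Ioc_mem_nhdsGT zero_lt_one) hslope)
  rw [ha, hb, ← EReal.coe_add, EReal.coe_le_coe_iff, inner_sub_left,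
    inner_intervalIntegral_left (hH.intervalIntegrable_gradient p)]
  linarith

lemma fenchelConj_le_of_mem_hopfArgmax (hH : ConvexHamiltonianOn H Hp [[0, t]]) (ht : 0 ≤ t)
    (ha : fenchelConj σ p = a) (hq : q ∈ hopfArgmax σ H t (z + ∫ τ in (0:ℝ)..t, Hp τ p)) :
    fenchelConj σ q ≤ ((⟪z, q - p⟫ : ℝ) : EReal) + fenchelConj σ p := by
  refine (fenchelConj_le_of_coe_le_hopfPhi ((hopfPhi_eq_coe ha).symm.trans_le (hq p))).trans ?_
  rw [ha, ← EReal.coe_add, EReal.coe_le_coe_iff]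
  have hconv := hH.intervalIntegral_inner_gradient_le ht p (q - p)
  rw [add_sub_cancel] at hconv
  have hx : ⟪z + ∫ τ in (0:ℝ)..t, Hp τ p, q⟫ - ⟪z + ∫ τ in (0:ℝ)..t, Hp τ p, p⟫ =
      ⟪z, q - p⟫ + ∫ τ in (0:ℝ)..t, ⟪Hp τ p, q - p⟫ := by
    rw [← inner_sub_right, inner_add_left,
      inner_intervalIntegral_left (hH.intervalIntegrable_gradient p)]
  linarith

end ConvexHamiltonianOn

theorem stmt10_general {n : ℕ} (T : ℝ)
    (σ : EuclideanSpace ℝ (Fin n) → ℝ)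
    (hconv : ConvexOn ℝ Set.univ σ) (hσ : ContDiff ℝ 1 σ)
    (H : ℝ → EuclideanSpace ℝ (Fin n) → ℝ)
    (Hp : ℝ → EuclideanSpace ℝ (Fin n) → EuclideanSpace ℝ (Fin n))
    (hH : ContinuousOn (fun p : ℝ × EuclideanSpace ℝ (Fin n) => H p.1 p.2)
      (Set.Icc 0 T ×ˢ Set.univ))
    (hHconv : ∀ t ∈ Set.Icc (0:ℝ) T, ConvexOn ℝ Set.univ (H t))
    (hHp : ∀ t q, HasGradientAt (H t) (Hp t q) q)
    -- strict convexity of σ* on segments of its effective domain where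
    -- the subdifferential is nonempty:
    (hstrict : ∀ p q z : EuclideanSpace ℝ (Fin n), p ≠ q →
      (∀ w, ((⟪z, w - q⟫ : ℝ) : EReal) + fenchelConj σ q ≤ fenchelConj σ w) →
      ((⟪z, p - q⟫ : ℝ) : EReal) + fenchelConj σ q < fenchelConj σ p)
    (t₀ : ℝ) (ht₀ : t₀ ∈ Set.Ioo 0 T)
    (y x₀ p₀ : EuclideanSpace ℝ (Fin n))
    (hp₀ : p₀ = gradient σ y)
    (hmax : p₀ ∈ hopfArgmax σ H t₀ x₀)
    (x : ℝ → EuclideanSpace ℝ (Fin n))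
    (hx : ∀ t, x t = x₀ + ∫ τ in t₀..t, Hp τ p₀) :
    ∀ t₁ ∈ Set.Ico (0:ℝ) t₀, hopfArgmax σ H t₁ (x t₁) ⊆ hopfArgmax σ H t₀ x₀ := by
  intro t₁ ht₁ q hq
  have hHam : ConvexHamiltonianOn H Hp (Icc 0 T) :=
    ⟨fun q => hH.comp (continuous_id.prodMk continuous_const).continuousOn
      fun τ hτ => ⟨hτ, mem_univ q⟩, hHconv, fun τ _ => hHp τ⟩
  have hH₀ := hHam.mono (uIcc_of_le ht₀.1.le ▸ Icc_subset_Icc le_rfl ht₀.2.le)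
  have hH₁ := hHam.mono (uIcc_of_le ht₁.1 ▸ Icc_subset_Icc le_rfl (ht₁.2.trans ht₀.2).le)
  have ha := fenchelConj_eq_of_hasGradientAt hconv
    (hp₀ ▸ (hσ.differentiable one_ne_zero y).hasGradientAt)
  have hxt : x t₁ = (x₀ - ∫ τ in (0:ℝ)..t₀, Hp τ p₀) + ∫ τ in (0:ℝ)..t₁, Hp τ p₀ := by
    rw [hx, ← intervalIntegral.integral_interval_sub_left (hH₁.intervalIntegrable_gradient p₀)
      (hH₀.intervalIntegrable_gradient p₀)]
    abel
  have hle := hH₁.fenchelConj_le_of_mem_hopfArgmax ht₁.1 ha (hxt ▸ hq)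
  obtain rfl : q = p₀ := by_contra fun hne =>
    (hstrict q p₀ _ hne (hH₀.hasSubgradientAt_fenchelConj_of_mem_hopfArgmax hmax ha)).not_ge hle
  exact hmax

theorem stmt10 {n : ℕ} (T : ℝ) (hT : 0 < T) (L : NNReal)
    (σ : EuclideanSpace ℝ (Fin n) → ℝ)
    (hconv : ConvexOn ℝ Set.univ σ) (hσ : ContDiff ℝ 1 σ)
    (hlip : LipschitzWith L σ)
    (H : ℝ → EuclideanSpace ℝ (Fin n) → ℝ)
    (Hp : ℝ → EuclideanSpace ℝ (Fin n) → EuclideanSpace ℝ (Fin n))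
    (hH : ContinuousOn (fun p : ℝ × EuclideanSpace ℝ (Fin n) => H p.1 p.2)
      (Set.Icc 0 T ×ˢ Set.univ))
    (hHconv : ∀ t ∈ Set.Icc (0:ℝ) T, ConvexOn ℝ Set.univ (H t))
    (hHp : ∀ t q, HasGradientAt (H t) (Hp t q) q)
    -- strict convexity of σ* on segments of its effective domain where
    -- the subdifferential is nonempty:
    (hstrict : ∀ p q z : EuclideanSpace ℝ (Fin n), p ≠ q →
      (∀ w, ((⟪z, w - q⟫ : ℝ) : EReal) + fenchelConj σ q ≤ fenchelConj σ w) →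
      ((⟪z, p - q⟫ : ℝ) : EReal) + fenchelConj σ q < fenchelConj σ p)
    (t₀ : ℝ) (ht₀ : t₀ ∈ Set.Ioo 0 T)
    (y x₀ p₀ : EuclideanSpace ℝ (Fin n))
    (hp₀ : p₀ = gradient σ y)
    (hmax : p₀ ∈ hopfArgmax σ H t₀ x₀)
    (x : ℝ → EuclideanSpace ℝ (Fin n))
    (hx : ∀ t, x t = x₀ + ∫ τ in t₀..t, Hp τ p₀) :
    ∀ t₁ ∈ Set.Ico (0:ℝ) t₀, hopfArgmax σ H t₁ (x t₁) ⊆ hopfArgmax σ H t₀ x₀ :=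
  stmt10_general T σ hconv hσ H Hp hH hHconv hHp hstrict t₀ ht₀ y x₀ p₀ hp₀ hmax x hx
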